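/- arXiv:2507.09325 — 2 statements merged into one kernel-verified Lean document; each statement's English description precedes it below -/
import Mathlib

section
/- Let m > 1 and let K, X be positive random variables (K nondegenerate and independent of X) with E[ln(K + (m-1)X)] = E[ln(mK)]. Then E[X] > (exp(E[ln(mK)]) - E[K])/(m-1). -/
/-!
Put `Y = K + (m - 1) X`. Strict Jensen for `exp` applied to `log Y` gives
`exp (E[ln(mK)]) = exp (E[ln Y]) < E[Y] = E[K] + (m - 1) E[X]`, which rearranges to the claim.
Jensen is strict unless `Y` is a.e. a constant `c`; then `K = c - (m - 1) X` a.e. is a function of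
`X`, so independence of `K` and `X` makes `K` independent of itself, hence a.e. constant.
-/

open MeasureTheory ProbabilityTheory Real

namespace ProbabilityTheory

variable {Ω β γ : Type*} {mΩ : MeasurableSpace Ω} {μ : Measure Ω}
  [MeasurableSpace β] [Nonempty β] [MeasurableSpace.CountablySeparated β] [MeasurableSpace γ]

/-- The events `{f ∈ U}` and `{f ∉ U}` are independent and disjoint, so one of them is null;
countably many measurable `U` separate the points of `β`. -/
theorem IndepFun.exists_ae_eq_const_of_self {f : Ω → β} (h : IndepFun f f μ) :
    ∃ c, f =ᵐ[μ] fun _ => c := by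
  refine Filter.exists_eventuallyEq_const_of_forall_separating MeasurableSet fun U hU => ?_
  have hnull : μ (f ⁻¹' U) * μ (f ⁻¹' Uᶜ) = 0 := by
    rw [← h.measure_inter_preimage_eq_mul U Uᶜ hU hU.compl, ← Set.preimage_inter,
      Set.inter_compl_self, Set.preimage_empty, measure_empty]
  rcases mul_eq_zero.mp hnull with hU_null | hUc_null
  · exact Or.inr (measure_eq_zero_iff_ae_notMem.mp hU_null)
  · exact Or.inl ((measure_eq_zero_iff_ae_notMem.mp hUc_null).mono fun _ hω => not_not.mp hω)

theorem IndepFun.exists_ae_eq_const_of_ae_eq_comp {f : Ω → β} {g : Ω → γ} {φ : γ → β}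
    (h : IndepFun f g μ) (hφ : Measurable φ) (hfg : f =ᵐ[μ] φ ∘ g) :
    ∃ c, f =ᵐ[μ] fun _ => c :=
  ((h.comp measurable_id hφ).congr .rfl hfg.symm).exists_ae_eq_const_of_self

end ProbabilityTheory

theorem exp_integral_log_lt_integral {Ω : Type*} {mΩ : MeasurableSpace Ω} {μ : Measure Ω}
    [IsProbabilityMeasure μ] {Y : Ω → ℝ} (hY_pos : ∀ᵐ ω ∂μ, 0 < Y ω) (hY_int : Integrable Y μ)
    (hlogY_int : Integrable (fun ω => log (Y ω)) μ) (hY_nonconst : ¬ ∃ c, Y =ᵐ[μ] fun _ => c) :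
    exp (∫ ω, log (Y ω) ∂μ) < ∫ ω, Y ω ∂μ := by
  have hexp_log : (fun ω => exp (log (Y ω))) =ᵐ[μ] Y := hY_pos.mono fun _ hω => exp_log hω
  rcases strictConvexOn_exp.ae_eq_const_or_map_average_lt continuous_exp.continuousOn
      isClosed_univ (.of_forall fun _ => Set.mem_univ _) hlogY_int
      (hY_int.congr hexp_log.symm) with hlog_const | hlt
  · refine absurd ⟨exp (⨍ ω, log (Y ω) ∂μ), ?_⟩ hY_nonconst
    filter_upwards [hlog_const, hY_pos] with ω hω hω_pos
    rw [← exp_log hω_pos, hω, Function.const_apply]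
  · simpa only [average_eq_integral, integral_congr_ae hexp_log] using hlt

theorem bevertonHolt_lower_bound_general
    {Ω : Type*} [MeasureSpace Ω] [IsProbabilityMeasure (ℙ : Measure Ω)]
    (m : ℝ) (hm : 1 < m)
    (K X : Ω → ℝ)
    (hK_pos : ∀ᵐ ω ∂ℙ, 0 < K ω) (hX_pos : ∀ᵐ ω ∂ℙ, 0 < X ω)
    (hnondeg : ¬ ∃ c : ℝ, K =ᵐ[ℙ] fun _ => c)
    (hindep : IndepFun K X)
    (hK_int : Integrable K) (hX_int : Integrable X)
    (hlogsum_int : Integrable (fun ω => Real.log (K ω + (m - 1) * X ω)))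
    (hstat : ∫ ω, Real.log (K ω + (m - 1) * X ω) = ∫ ω, Real.log (m * K ω)) :
    (Real.exp (∫ ω, Real.log (m * K ω)) - ∫ ω, K ω) / (m - 1) < ∫ ω, X ω := by
  have hm1 : 0 < m - 1 := sub_pos.mpr hm
  have hY_pos : ∀ᵐ ω ∂ℙ, 0 < K ω + (m - 1) * X ω := by
    filter_upwards [hK_pos, hX_pos] with ω hKω hXω
    positivity
  have hY_nonconst : ¬ ∃ c, (fun ω => K ω + (m - 1) * X ω) =ᵐ[ℙ] fun _ => c := by
    rintro ⟨c, hc⟩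
    refine hnondeg (hindep.exists_ae_eq_const_of_ae_eq_comp (φ := fun x => c - (m - 1) * x)
      (by fun_prop) (hc.mono fun ω hω => ?_))
    simp only [Function.comp_apply, ← hω]
    ring
  have hjensen := exp_integral_log_lt_integral hY_pos (hK_int.add (hX_int.const_mul (m - 1)))
    hlogsum_int hY_nonconst
  rw [hstat, integral_add hK_int (hX_int.const_mul (m - 1)), integral_const_mul] at hjensen
  rw [div_lt_iff₀ hm1]
  linarith

theorem bevertonHolt_lower_bound
    {Ω : Type*} [MeasureSpace Ω] [IsProbabilityMeasure (ℙ : Measure Ω)]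
    (m : ℝ) (hm : 1 < m)
    (K X : Ω → ℝ)
    (hK_pos : ∀ᵐ ω ∂ℙ, 0 < K ω) (hX_pos : ∀ᵐ ω ∂ℙ, 0 < X ω)
    (hnondeg : ¬ ∃ c : ℝ, K =ᵐ[ℙ] fun _ => c)
    (hindep : IndepFun K X)
    (hK_int : Integrable K) (hX_int : Integrable X)
    (hlogmK_int : Integrable (fun ω => Real.log (m * K ω)))
    (hlogsum_int : Integrable (fun ω => Real.log (K ω + (m - 1) * X ω)))
    (hstat : ∫ ω, Real.log (K ω + (m - 1) * X ω) = ∫ ω, Real.log (m * K ω)) :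
    (Real.exp (∫ ω, Real.log (m * K ω)) - ∫ ω, K ω) / (m - 1) < ∫ ω, X ω :=
  bevertonHolt_lower_bound_general m hm K X hK_pos hX_pos hnondeg hindep hK_int hX_int hlogsum_int
    hstat
end

section
/- Let α > 1, 0 < c ≤ 1, and let K, N be positive random variables, K nondegenerate, independent of each other, with E[ln(α/(1+K·N)^c)] = 0. Then E[N] > (α^{1/c} - 1)/E[K]. -/
/-!
Write `X = 1 + K N`. Stationarity says `E[ln X] = ln α / c`, while independence gives
`E[X] = 1 + E[K] E[N]`. Strict Jensen for the logarithm yields `ln α / c < ln (1 + E[K] E[N])`,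
i.e. `α ^ (1 / c) - 1 < E[K] E[N]`. Jensen is strict because `X` is not almost surely constant:
otherwise `K = (b - 1) / N` would be a function of `N`, hence independent of itself, hence of
variance zero, contradicting the nondegeneracy of `K`.
-/

open MeasureTheory ProbabilityTheory Real

lemma Real.log_div_rpow {α y : ℝ} (c : ℝ) (hα : 0 < α) (hy : 0 < y) :
    log (α / y ^ c) = log α - c * log y := by
  rw [log_div hα.ne' (rpow_pos_of_pos hy c).ne', log_rpow hy]

lemma Real.log_le_log_add_div_sub_one {x m : ℝ} (hx : 0 < x) (hm : 0 < m) :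
    log x ≤ log m + x / m - 1 := by
  have := log_le_sub_one_of_pos (div_pos hx hm)
  rw [log_div hx.ne' hm.ne'] at this
  linarith

lemma Real.log_lt_log_add_div_sub_one {x m : ℝ} (hx : 0 < x) (hm : 0 < m) (hxm : x ≠ m) :
    log x < log m + x / m - 1 := by
  have := log_lt_sub_one_of_pos (div_pos hx hm) (by rwa [ne_eq, div_eq_one_iff_eq hm.ne'])
  rw [log_div hx.ne' hm.ne'] at this
  linarith

section

variable {Ω : Type*} [MeasurableSpace Ω] {μ : Measure Ω} [IsProbabilityMeasure μ]

lemma MeasureTheory.integral_pos_of_ae_pos {f : Ω → ℝ} (hpos : ∀ᵐ ω ∂μ, 0 < f ω)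
    (hf : Integrable f μ) : 0 < ∫ ω, f ω ∂μ := by
  rw [integral_pos_iff_support_of_nonneg_ae (hpos.mono fun _ h ↦ h.le) hf,
    measure_congr (hpos.mono fun _ h ↦ eq_true h.ne' : Function.support f =ᵐ[μ] Set.univ)]
  simp

namespace ProbabilityTheory

lemma IndepFun.ae_eq_integral_of_self {X : Ω → ℝ} (h : IndepFun X X μ) (hX : Integrable X μ) :
    X =ᵐ[μ] fun _ ↦ μ[X] := by
  have hX2 : MemLp X 2 μ :=
    (memLp_two_iff_integrable_sq hX.1).2 (by simp only [sq]; exact h.integrable_mul hX hX)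
  refine ae_eq_integral_of_variance_eq_zero hX2 ?_
  rw [← covariance_self hX.aemeasurable]
  exact h.covariance_eq_zero hX2 hX2

lemma IndepFun.ae_eq_integral_of_ae_eq_comp {β : Type*} [MeasurableSpace β] {X : Ω → ℝ}
    {Y : Ω → β} {g : β → ℝ} (h : IndepFun X Y μ) (hX : Integrable X μ) (hg : Measurable g)
    (hXY : X =ᵐ[μ] g ∘ Y) : X =ᵐ[μ] fun _ ↦ μ[X] :=
  ((h.comp measurable_id hg).congr .rfl hXY.symm).ae_eq_integral_of_self hX

lemma IndepFun.ae_eq_integral_of_mul_ae_eq_const {X Y : Ω → ℝ} {b : ℝ} (h : IndepFun X Y μ)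
    (hX : Integrable X μ) (hY : ∀ᵐ ω ∂μ, Y ω ≠ 0) (hXY : ∀ᵐ ω ∂μ, X ω * Y ω = b) :
    X =ᵐ[μ] fun _ ↦ μ[X] := by
  refine h.ae_eq_integral_of_ae_eq_comp hX (g := fun y ↦ b / y) (by fun_prop) ?_
  filter_upwards [hY, hXY] with ω hYω hXYω
  rw [Function.comp_apply, ← hXYω, mul_div_cancel_right₀ _ hYω]

end ProbabilityTheory

lemma integrable_log_of_integrable_log_div_rpow {Y : Ω → ℝ} {α c : ℝ} (hα : 0 < α) (hc : c ≠ 0)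
    (hY : ∀ᵐ ω ∂μ, 0 < Y ω) (h : Integrable (fun ω ↦ log (α / Y ω ^ c)) μ) :
    Integrable (fun ω ↦ log (Y ω)) μ := by
  refine (((integrable_const (log α)).sub h).div_const c).congr ?_
  filter_upwards [hY] with ω hω
  rw [Pi.sub_apply, log_div_rpow c hα hω]
  field_simp
  ring

lemma integral_log_div_rpow {Y : Ω → ℝ} {α : ℝ} (c : ℝ) (hα : 0 < α) (hY : ∀ᵐ ω ∂μ, 0 < Y ω)
    (h : Integrable (fun ω ↦ log (Y ω)) μ) :
    ∫ ω, log (α / Y ω ^ c) ∂μ = log α - c * ∫ ω, log (Y ω) ∂μ := by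
  rw [integral_congr_ae (hY.mono fun _ hω ↦ log_div_rpow c hα hω),
    integral_sub (integrable_const _) (h.const_mul c), integral_const_mul]
  simp

/-- Integrating the tangent line of `log` at the mean avoids
`StrictConcaveOn.ae_eq_const_or_lt_map_average`, which needs a closed domain. -/
lemma integral_log_lt_log_integral {X : Ω → ℝ} (hpos : ∀ᵐ ω ∂μ, 0 < X ω)
    (hX : Integrable X μ) (hlog : Integrable (fun ω ↦ log (X ω)) μ)
    (hX_ne : ¬ X =ᵐ[μ] fun _ ↦ μ[X]) :
    ∫ ω, log (X ω) ∂μ < log μ[X] := by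
  set m := μ[X]
  have hm : 0 < m := integral_pos_of_ae_pos hpos hX
  set T : Ω → ℝ := fun ω ↦ log m + X ω / m - 1
  have hT_add : Integrable (fun ω ↦ log m + X ω / m) μ := (integrable_const _).add (hX.div_const m)
  have hT : Integrable T μ := hT_add.sub (integrable_const 1)
  have hT_mean : ∫ ω, T ω ∂μ = log m := by
    rw [integral_sub hT_add (integrable_const 1), integral_add (integrable_const _) (hX.div_const m),
      integral_div]
    simp [m, hm.ne']
  have hle : (fun ω ↦ log (X ω)) ≤ᵐ[μ] T := by
    filter_upwards [hpos] with ω hω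
    exact log_le_log_add_div_sub_one hω hm
  have hne : ¬ (fun ω ↦ log (X ω)) =ᵐ[μ] T := by
    refine fun heq ↦ hX_ne ?_
    filter_upwards [heq, hpos] with ω heqω hω
    by_contra hXm
    exact (log_lt_log_add_div_sub_one hω hm hXm).ne heqω
  calc ∫ ω, log (X ω) ∂μ < ∫ ω, T ω ∂μ :=
        (integral_mono_ae hlog hT hle).lt_of_ne (mt (integral_eq_iff_of_ae_le hlog hT hle).1 hne)
    _ = log m := hT_mean

end

theorem hassell_noise_increases_population_general
    {Ω : Type*} [MeasureSpace Ω] [IsProbabilityMeasure (ℙ : Measure Ω)]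
    (α c : ℝ) (hα : 1 < α) (hc0 : 0 < c)
    (K N : Ω → ℝ)
    (hK_pos : ∀ᵐ ω ∂ℙ, 0 < K ω) (hN_pos : ∀ᵐ ω ∂ℙ, 0 < N ω)
    (hnondeg : ¬ ∃ b : ℝ, K =ᵐ[ℙ] fun _ => b)
    (hindep : IndepFun K N)
    (hK_int : Integrable K) (hN_int : Integrable N)
    (hlog_int : Integrable (fun ω => Real.log (α / (1 + K ω * N ω) ^ c)))
    (hstat : ∫ ω, Real.log (α / (1 + K ω * N ω) ^ c) = 0) :
    (α ^ (1 / c) - 1) / (∫ ω, K ω) < ∫ ω, N ω := by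
  set X : Ω → ℝ := fun ω ↦ 1 + K ω * N ω
  have hα0 : 0 < α := by linarith
  have hX_pos : ∀ᵐ ω, 0 < X ω := by
    filter_upwards [hK_pos, hN_pos] with ω hK hN
    positivity
  have hKN_int : Integrable (fun ω ↦ K ω * N ω) := hindep.integrable_mul hK_int hN_int
  have hX_int : Integrable X := (integrable_const 1).add hKN_int
  have hX_mean : ∫ ω, X ω = 1 + (∫ ω, K ω) * ∫ ω, N ω := by
    rw [integral_add (integrable_const 1) hKN_int,
      hindep.integral_fun_mul_eq_mul_integral hK_int.1 hN_int.1]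
    simp
  have hlogX_int := integrable_log_of_integrable_log_div_rpow hα0 hc0.ne' hX_pos hlog_int
  have hlogX_mean : ∫ ω, log (X ω) = log α / c := by
    rw [integral_log_div_rpow c hα0 hX_pos hlogX_int] at hstat
    field_simp
    linarith
  have hX_ne : ¬ X =ᵐ[ℙ] fun _ ↦ ∫ ω, X ω := by
    refine fun hconst ↦ hnondeg ⟨_, hindep.ae_eq_integral_of_mul_ae_eq_const hK_int
      (hN_pos.mono fun _ h ↦ h.ne') (b := (∫ ω, X ω) - 1) ?_⟩
    filter_upwards [hconst] with ω hω
    exact eq_sub_of_add_eq' hω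
  have hjensen := integral_log_lt_log_integral hX_pos hX_int hlogX_int hX_ne
  have hK_mean_pos := integral_pos_of_ae_pos hK_pos hK_int
  have hN_mean_nonneg : 0 ≤ ∫ ω, N ω := integral_nonneg_of_ae (hN_pos.mono fun _ h ↦ h.le)
  rw [hlogX_mean, hX_mean, lt_log_iff_exp_lt (by positivity), div_eq_mul_one_div,
    ← rpow_def_of_pos hα0] at hjensen
  rw [div_lt_iff₀ hK_mean_pos]
  linarith

theorem hassell_noise_increases_population
    {Ω : Type*} [MeasureSpace Ω] [IsProbabilityMeasure (ℙ : Measure Ω)]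
    (α c : ℝ) (hα : 1 < α) (hc0 : 0 < c) (hc1 : c ≤ 1)
    (K N : Ω → ℝ)
    (hK_pos : ∀ᵐ ω ∂ℙ, 0 < K ω) (hN_pos : ∀ᵐ ω ∂ℙ, 0 < N ω)
    (hnondeg : ¬ ∃ b : ℝ, K =ᵐ[ℙ] fun _ => b)
    (hindep : IndepFun K N)
    (hK_int : Integrable K) (hN_int : Integrable N)
    (hlog_int : Integrable (fun ω => Real.log (α / (1 + K ω * N ω) ^ c)))
    (hstat : ∫ ω, Real.log (α / (1 + K ω * N ω) ^ c) = 0) :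
    (α ^ (1 / c) - 1) / (∫ ω, K ω) < ∫ ω, N ω :=
  hassell_noise_increases_population_general α c hα hc0 K N hK_pos hN_pos hnondeg hindep hK_int
    hN_int hlog_int hstat
end
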